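/- arXiv:2209.00299 — 7 statements merged into one kernel-verified Lean document; each statement's English description precedes it below -/
import Mathlib

section
/- Let Λ and t be natural numbers with t ≤ Λ, and let L_1 ≥ L_2 ≥ ⋯ ≥ L_Λ ≥ 0 be a non-increasing sequence of natural numbers. For each j with 1 ≤ j ≤ L_1, let u_j denote the number of indices λ ∈ {1,…,Λ} with L_λ ≥ j. Then ∑_{j=1}^{L_1} [ C(Λ, t+1) − C(Λ − u_j, t+1) ] = ∑_{n=1}^{Λ} L_n · C(Λ − n, t). -/
/-- Hockey-stick / telescoping identity. -/
lemma hockey (Λ t : ℕ) : ∀ u, u ≤ Λ →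
    Nat.choose Λ (t + 1) - Nat.choose (Λ - u) (t + 1)
      = ∑ n ∈ Finset.Icc 1 u, Nat.choose (Λ - n) t := by
  intro u
  induction u with
  | zero => simp
  | succ u ih =>
    intro hu
    have hu' : u ≤ Λ := Nat.le_of_succ_le hu
    rw [Finset.sum_Icc_succ_top (by omega : 1 ≤ u + 1), ← ih hu']
    have hs : Λ - u = (Λ - (u + 1)) + 1 := by omega
    have hp : Nat.choose (Λ - u) (t + 1)
        = Nat.choose (Λ - (u + 1)) t + Nat.choose (Λ - (u + 1)) (t + 1) := by
      rw [hs]; exact Nat.choose_succ_succ _ _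
    have h1 : Nat.choose (Λ - u) (t + 1) ≤ Nat.choose Λ (t + 1) :=
      Nat.choose_le_choose _ (Nat.sub_le _ _)
    have h2 : Nat.choose (Λ - (u + 1)) (t + 1) ≤ Nat.choose (Λ - u) (t + 1) :=
      Nat.choose_le_choose _ (by omega)
    omega

lemma exists_ge_of_card (S : Finset ℕ) (Λ n : ℕ) (hS : S ⊆ Finset.Icc 1 Λ)
    (h : n ≤ S.card) (hn : 1 ≤ n) : ∃ l ∈ S, n ≤ l := by
  by_contra hc
  push_neg at hc
  have : S ⊆ Finset.Ico 1 n := by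
    intro l hl
    have := hS hl
    simp only [Finset.mem_Icc] at this
    simp only [Finset.mem_Ico]
    exact ⟨this.1, hc l hl⟩
  have := Finset.card_le_card this
  simp [Nat.card_Ico] at this
  omega

/-- For `t ≤ Λ` and a non-increasing sequence `L 1 ≥ L 2 ≥ ⋯ ≥ L Λ ≥ 0`,
with `u j` the number of indices `l ∈ {1,…,Λ}` with `L l ≥ j`, one has
`∑_{j=1}^{L 1} [C(Λ, t+1) − C(Λ − u j, t+1)] = ∑_{n=1}^{Λ} (L n) · C(Λ − n, t)`. -/
theorem stmt1 (Λ t : ℕ) (ht : t ≤ Λ) (L : ℕ → ℕ)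
    (hmono : ∀ i j, 1 ≤ i → i ≤ j → j ≤ Λ → L j ≤ L i) :
    ∑ j ∈ Finset.Icc 1 (L 1),
        (Nat.choose Λ (t + 1) -
          Nat.choose (Λ - ((Finset.Icc 1 Λ).filter (fun l => j ≤ L l)).card) (t + 1))
      = ∑ n ∈ Finset.Icc 1 Λ, L n * Nat.choose (Λ - n) t := by
  set u : ℕ → ℕ := fun j => ((Finset.Icc 1 Λ).filter (fun l => j ≤ L l)).card with hu
  have hule : ∀ j, u j ≤ Λ := by
    intro j
    have := Finset.card_le_card (Finset.filter_subset (fun l => j ≤ L l) (Finset.Icc 1 Λ))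
    simpa using this
  -- key equivalence: for 1 ≤ n ≤ Λ, 1 ≤ j : n ≤ u j ↔ j ≤ L n
  have hequiv : ∀ n j, 1 ≤ n → n ≤ Λ → (n ≤ u j ↔ j ≤ L n) := by
    intro n j hn hnΛ
    constructor
    · intro h
      obtain ⟨l, hl, hnl⟩ := exists_ge_of_card _ Λ n
        (Finset.filter_subset _ _) h hn
      simp only [Finset.mem_filter, Finset.mem_Icc] at hl
      obtain ⟨⟨_, hlΛ⟩, hjl⟩ := hl
      exact le_trans hjl (hmono n l hn hnl hlΛ)
    · intro h
      have hsub : Finset.Icc 1 n ⊆ (Finset.Icc 1 Λ).filter (fun l => j ≤ L l) := by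
        intro l hl
        simp only [Finset.mem_Icc] at hl
        simp only [Finset.mem_filter, Finset.mem_Icc]
        exact ⟨⟨hl.1, le_trans hl.2 hnΛ⟩, le_trans h (hmono l n hl.1 hl.2 hnΛ)⟩
      have := Finset.card_le_card hsub
      simpa using this
  calc ∑ j ∈ Finset.Icc 1 (L 1),
        (Nat.choose Λ (t + 1) - Nat.choose (Λ - u j) (t + 1))
      = ∑ j ∈ Finset.Icc 1 (L 1), ∑ n ∈ Finset.Icc 1 Λ,
          (if n ≤ u j then Nat.choose (Λ - n) t else 0) := by
        refine Finset.sum_congr rfl fun j _ => ?_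
        rw [hockey Λ t (u j) (hule j), ← Finset.sum_filter]
        congr 1
        ext n
        simp only [Finset.mem_filter, Finset.mem_Icc]
        constructor
        · intro h; exact ⟨⟨h.1, le_trans h.2 (hule j)⟩, h.2⟩
        · intro h; exact ⟨h.1.1, h.2⟩
    _ = ∑ n ∈ Finset.Icc 1 Λ, ∑ j ∈ Finset.Icc 1 (L 1),
          (if n ≤ u j then Nat.choose (Λ - n) t else 0) := Finset.sum_comm
    _ = ∑ n ∈ Finset.Icc 1 Λ, L n * Nat.choose (Λ - n) t := by
        refine Finset.sum_congr rfl fun n hn => ?_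
        simp only [Finset.mem_Icc] at hn
        rw [← Finset.sum_filter]
        have hfil : (Finset.Icc 1 (L 1)).filter (fun j => n ≤ u j) = Finset.Icc 1 (L n) := by
          ext j
          simp only [Finset.mem_filter, Finset.mem_Icc]
          constructor
          · intro h
            exact ⟨h.1.1, (hequiv n j hn.1 hn.2).1 h.2⟩
          · intro h
            refine ⟨⟨h.1, le_trans h.2 (hmono 1 n le_rfl hn.1 hn.2)⟩,
              (hequiv n j hn.1 hn.2).2 h.2⟩
        rw [hfil, Finset.sum_const, Nat.card_Icc]
        simp [Nat.mul_comm]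
end

section
/- Let N, K, Λ be positive natural numbers with Λ ≤ K, let M_s, M_p be positive reals with M_s + M_p ≤ N, and suppose t_s := Λ(M_s+M_p)/N and t_p := K(M_s+M_p)/N are natural numbers with t_s ≤ Λ and t_p ≤ K. Set F_1 := M_s/(M_s+M_p) and F_2 := M_p/(M_s+M_p). Let L_1 ≥ ⋯ ≥ L_Λ ≥ 0 be natural numbers with ∑_{λ=1}^{Λ} L_λ = K, and for 1 ≤ j ≤ L_1 let u_j := #{λ : L_λ ≥ j}. Then ( ∑_{j=1}^{L_1} [C(Λ, t_s+1) − C(Λ − u_j, t_s+1)] ) · F_1 / C(Λ, t_s) + C(K, t_p+1) · F_2 / C(K, t_p) = (M_s/(M_s+M_p)) · ( ∑_{n=1}^{Λ} L_n C(Λ−n, t_s) ) / C(Λ, t_s) + (M_p/(M_s+M_p)) · (K − t_p)/(t_p + 1). -/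
open Finset

lemma telescope_choose (Λ t : ℕ) : ∀ u, u ≤ Λ →
    Λ.choose (t+1) = (Λ - u).choose (t+1) + ∑ n ∈ Icc 1 u, (Λ - n).choose t := by
  intro u
  induction u with
  | zero => simp
  | succ u ih =>
    intro hu
    have hu' : u ≤ Λ := Nat.le_of_succ_le hu
    rw [ih hu', Finset.sum_Icc_succ_top (by omega : 1 ≤ u + 1)]
    have h1 : Λ - u = (Λ - (u+1)) + 1 := by omega
    rw [h1, Nat.choose_succ_succ]
    ring

lemma equiv_lem (Λ : ℕ) (L : ℕ → ℕ) (hmono : ∀ i j, 1 ≤ i → i ≤ j → j ≤ Λ → L j ≤ L i)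
    (n j : ℕ) (hn1 : 1 ≤ n) (hnΛ : n ≤ Λ) :
    j ≤ L n ↔ n ≤ ((Icc 1 Λ).filter (fun l => j ≤ L l)).card := by
  constructor
  · intro h
    have hsub : Icc 1 n ⊆ (Icc 1 Λ).filter (fun l => j ≤ L l) := by
      intro m hm
      simp only [mem_Icc] at hm
      simp only [mem_filter, mem_Icc]
      exact ⟨⟨hm.1, le_trans hm.2 hnΛ⟩, le_trans h (hmono m n hm.1 hm.2 hnΛ)⟩
    calc n = (Icc 1 n).card := by simp
    _ ≤ _ := card_le_card hsub
  · intro h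
    by_contra hc
    push_neg at hc
    have hsub : (Icc 1 Λ).filter (fun l => j ≤ L l) ⊆ Icc 1 (n-1) := by
      intro l hl
      simp only [mem_filter, mem_Icc] at hl
      simp only [mem_Icc]
      refine ⟨hl.1.1, ?_⟩
      by_contra hln
      push_neg at hln
      have : L l ≤ L n := hmono n l hn1 (by omega) hl.1.2
      omega
    have := card_le_card hsub
    simp [Nat.card_Icc] at this
    omega

/-- Rate computation of Theorem 1 of the paper.  The total normalized
length of all transmissions equals the closed-form rate
`(Ms/(Ms+Mp)) · (∑_{n=1}^{Λ} L n · C(Λ−n, ts)) / C(Λ, ts) + (Mp/(Ms+Mp)) · (K − tp)/(tp+1)`. -/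
theorem stmt2 (N K Λ : ℕ) (hN : 0 < N) (hK : 0 < K) (hΛ : 0 < Λ) (hΛK : Λ ≤ K)
    (Ms Mp : ℝ) (hMs : 0 < Ms) (hMp : 0 < Mp) (hsum : Ms + Mp ≤ (N : ℝ))
    (ts tp : ℕ)
    (hts : (ts : ℝ) = (Λ : ℝ) * (Ms + Mp) / (N : ℝ))
    (htp : (tp : ℝ) = (K : ℝ) * (Ms + Mp) / (N : ℝ))
    (htsΛ : ts ≤ Λ) (htpK : tp ≤ K)
    (F1 F2 : ℝ) (hF1 : F1 = Ms / (Ms + Mp)) (hF2 : F2 = Mp / (Ms + Mp))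
    (L : ℕ → ℕ) (hmono : ∀ i j, 1 ≤ i → i ≤ j → j ≤ Λ → L j ≤ L i)
    (hL : ∑ l ∈ Finset.Icc 1 Λ, L l = K) :
    (∑ j ∈ Finset.Icc 1 (L 1),
          ((Nat.choose Λ (ts + 1) : ℝ) -
            (Nat.choose (Λ - ((Finset.Icc 1 Λ).filter (fun l => j ≤ L l)).card) (ts + 1) : ℝ)))
        * F1 / (Nat.choose Λ ts : ℝ)
      + (Nat.choose K (tp + 1) : ℝ) * F2 / (Nat.choose K tp : ℝ)
    = Ms / (Ms + Mp) *
          (∑ n ∈ Finset.Icc 1 Λ, (L n : ℝ) * (Nat.choose (Λ - n) ts : ℝ)) /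
          (Nat.choose Λ ts : ℝ)
      + Mp / (Ms + Mp) * ((K : ℝ) - (tp : ℝ)) / ((tp : ℝ) + 1) := by
  have hMsum : (0:ℝ) < Ms + Mp := by linarith
  have hCK : 0 < K.choose tp := Nat.choose_pos htpK
  set u : ℕ → ℕ := fun j => ((Icc 1 Λ).filter (fun l => j ≤ L l)).card with hu
  have huΛ : ∀ j, u j ≤ Λ := by
    intro j
    calc u j ≤ (Icc 1 Λ).card := card_filter_le _ _
    _ = Λ := by simp
  have hsum1 : ∑ j ∈ Icc 1 (L 1),
        ((Λ.choose (ts+1) : ℝ) - ((Λ - u j).choose (ts+1) : ℝ))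
      = ∑ n ∈ Icc 1 Λ, (L n : ℝ) * ((Λ - n).choose ts : ℝ) := by
    have step1 : ∀ j, ((Λ.choose (ts+1) : ℝ) - ((Λ - u j).choose (ts+1) : ℝ))
        = ∑ n ∈ Icc 1 (u j), ((Λ - n).choose ts : ℝ) := by
      intro j
      have h := telescope_choose Λ ts (u j) (huΛ j)
      have h2 := congrArg (fun x : ℕ => (x : ℝ)) h
      push_cast at h2
      linarith
    calc ∑ j ∈ Icc 1 (L 1), ((Λ.choose (ts+1) : ℝ) - ((Λ - u j).choose (ts+1) : ℝ))
        = ∑ j ∈ Icc 1 (L 1), ∑ n ∈ Icc 1 Λ,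
            (if j ≤ L n then ((Λ - n).choose ts : ℝ) else 0) := by
          refine Finset.sum_congr rfl fun j hj => ?_
          rw [step1 j, ← Finset.sum_filter]
          refine Finset.sum_congr ?_ fun _ _ => rfl
          ext n
          simp only [mem_Icc, mem_filter]
          constructor
          · intro hn
            refine ⟨⟨hn.1, le_trans hn.2 (huΛ j)⟩, ?_⟩
            exact (equiv_lem Λ L hmono n j hn.1 (le_trans hn.2 (huΛ j))).mpr hn.2
          · intro hn
            exact ⟨hn.1.1, (equiv_lem Λ L hmono n j hn.1.1 hn.1.2).mp hn.2⟩
      _ = ∑ n ∈ Icc 1 Λ, ∑ j ∈ Icc 1 (L 1),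
            (if j ≤ L n then ((Λ - n).choose ts : ℝ) else 0) := Finset.sum_comm
      _ = ∑ n ∈ Icc 1 Λ, (L n : ℝ) * ((Λ - n).choose ts : ℝ) := by
          refine Finset.sum_congr rfl fun n hn => ?_
          simp only [mem_Icc] at hn
          rw [← Finset.sum_filter]
          have hfe : (Icc 1 (L 1)).filter (fun j => j ≤ L n) = Icc 1 (L n) := by
            have hLn : L n ≤ L 1 := hmono 1 n le_rfl hn.1 hn.2
            ext j
            simp only [mem_filter, mem_Icc]
            omega
          rw [hfe, Finset.sum_const, Nat.card_Icc]
          simp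
  have hA : (∑ j ∈ Icc 1 (L 1),
        ((Λ.choose (ts+1) : ℝ) - ((Λ - u j).choose (ts+1) : ℝ))) * F1 / (Λ.choose ts : ℝ)
      = Ms / (Ms + Mp) * (∑ n ∈ Icc 1 Λ, (L n : ℝ) * ((Λ - n).choose ts : ℝ))
          / (Λ.choose ts : ℝ) := by
    rw [hsum1, hF1]; ring
  have hB : (K.choose (tp+1) : ℝ) * F2 / (K.choose tp : ℝ)
      = Mp / (Ms + Mp) * ((K : ℝ) - (tp : ℝ)) / ((tp : ℝ) + 1) := by
    have hid : (K.choose (tp+1) : ℝ) * ((tp : ℝ) + 1) = ((K:ℝ) - tp) * (K.choose tp : ℝ) := by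
      have h := Nat.choose_succ_right_eq K tp
      have hc := congrArg (fun x : ℕ => (x : ℝ)) h
      push_cast [Nat.cast_sub htpK] at hc
      linarith
    rw [hF2]
    have hCK' : (K.choose tp : ℝ) ≠ 0 := by positivity
    have htp1 : ((tp : ℝ) + 1) ≠ 0 := by positivity
    have hdiv : (K.choose (tp+1) : ℝ) / (K.choose tp : ℝ) = ((K:ℝ) - tp) / ((tp:ℝ) + 1) := by
      rw [div_eq_div_iff hCK' htp1]
      linarith
    calc (K.choose (tp+1) : ℝ) * (Mp / (Ms + Mp)) / (K.choose tp : ℝ)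
        = Mp / (Ms + Mp) * ((K.choose (tp+1) : ℝ) / (K.choose tp : ℝ)) := by ring
    _ = Mp / (Ms + Mp) * (((K:ℝ) - tp) / ((tp:ℝ) + 1)) := by rw [hdiv]
    _ = Mp / (Ms + Mp) * ((K:ℝ) - (tp:ℝ)) / ((tp:ℝ) + 1) := by ring
  rw [← hA, ← hB]
end

section
/- Let K, Λ, t_s, t_p be natural numbers and let c : {1,…,K} → {1,…,Λ} be a nondecreasing map (user k is attached to helper cache c(k), users ordered so that c is monotone). Define a vertex set V as the disjoint union of V_1 = {(k, τ) : k ∈ {1,…,K}, τ ⊆ {1,…,Λ}, |τ| = t_s} and V_2 = {(k, ρ) : k ∈ {1,…,K}, ρ ⊆ {1,…,K}, |ρ| = t_p}. Say that user k knows a vertex (k', τ) ∈ V_1 if c(k) ∈ τ, and knows a vertex (k', ρ) ∈ V_2 if k ∈ ρ. Define a directed edge from vertex v to vertex w if the user of v knows w. Let H = H_1 ∪ H_2 where H_1 = {(k, τ) ∈ V_1 : τ ∩ {1,…,c(k)} = ∅} and H_2 = {(k, ρ) ∈ V_2 : ρ ∩ {1,…,k} = ∅}. Then every directed edge between two vertices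 of H strictly decreases the user index (if there is an edge from v ∈ H to w ∈ H then the user index of w is strictly smaller than the user index of v); consequently, the directed graph induced on H contains no directed cycle. -/
/-- The vertex set of the index-coding side-information digraph: `V₁` consists of pairs
`(k, τ)` where `τ ⊆ {caches}` with `|τ| = ts`, and `V₂` consists of pairs `(k, ρ)` where
`ρ ⊆ {users}` with `|ρ| = tp`. -/
def CCVertex (K Λ ts tp : ℕ) : Type :=
  (Fin K × {τ : Finset (Fin Λ) // τ.card = ts}) ⊕
    (Fin K × {ρ : Finset (Fin K) // ρ.card = tp})

/-- The user index of a vertex. -/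
def ccUser {K Λ ts tp : ℕ} : CCVertex K Λ ts tp → Fin K :=
  Sum.elim Prod.fst Prod.fst

/-- User `k` knows a `V₁`-vertex `(k', τ)` iff `c k ∈ τ` (helper-cache side information),
and knows a `V₂`-vertex `(k', ρ)` iff `k ∈ ρ` (private-cache side information). -/
def ccKnows {K Λ ts tp : ℕ} (c : Fin K → Fin Λ) (k : Fin K) :
    CCVertex K Λ ts tp → Prop :=
  Sum.elim (fun p => c k ∈ p.2.1) (fun p => k ∈ p.2.1)

/-- Directed edge from `v` to `w` iff the user of `v` knows `w`. -/
def ccEdge {K Λ ts tp : ℕ} (c : Fin K → Fin Λ) (v w : CCVertex K Λ ts tp) : Prop :=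
  ccKnows c (ccUser v) w

/-- The candidate acyclic set `H = H₁ ∪ H₂`: a `V₁`-vertex `(k, τ)` is in `H₁` iff
`τ ∩ {1,…,c k} = ∅` (every cache in `τ` is strictly larger than `c k`), and a
`V₂`-vertex `(k, ρ)` is in `H₂` iff `ρ ∩ {1,…,k} = ∅` (every user in `ρ` is strictly
larger than `k`). -/
def ccH {K Λ ts tp : ℕ} (c : Fin K → Fin Λ) : Set (CCVertex K Λ ts tp) :=
  {v | Sum.elim (fun p : Fin K × {τ : Finset (Fin Λ) // τ.card = ts} =>
          ∀ μ ∈ p.2.1, c p.1 < μ)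
        (fun p : Fin K × {ρ : Finset (Fin K) // ρ.card = tp} =>
          ∀ i ∈ p.2.1, p.1 < i) v}

/-- with users ordered compatibly with their caches (`c` monotone),
every directed edge between two vertices of `H` strictly decreases the user index;
consequently the digraph induced on `H` has no directed cycle. -/
theorem stmt4 (K Λ ts tp : ℕ) (c : Fin K → Fin Λ) (hc : Monotone c) :
    (∀ v w : CCVertex K Λ ts tp, v ∈ ccH c → w ∈ ccH c → ccEdge c v w →
        ccUser w < ccUser v) ∧
    (∀ v : CCVertex K Λ ts tp, v ∈ ccH c →
        ¬ Relation.TransGen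
            (fun a b : CCVertex K Λ ts tp => a ∈ ccH c ∧ b ∈ ccH c ∧ ccEdge c a b)
            v v) := by
  have key : ∀ v w : CCVertex K Λ ts tp, v ∈ ccH c → w ∈ ccH c → ccEdge c v w →
      ccUser w < ccUser v := by
    intro v w hv hw he
    cases w with
    | inl p =>
        have h1 : c (ccUser v) ∈ p.2.1 := he
        have h2 : c p.1 < c (ccUser v) := hw _ h1
        by_contra hle
        exact absurd (hc (le_of_not_gt hle)) (not_le_of_gt h2)
    | inr p =>
        exact hw _ he
  refine ⟨key, fun v hv hcyc => ?_⟩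
  have : ∀ a b, (a ∈ ccH c ∧ b ∈ ccH c ∧ ccEdge c a b) → ccUser b < ccUser a :=
    fun a b ⟨ha, hb, he⟩ => key a b ha hb he
  have mono : ∀ a b, Relation.TransGen
      (fun a b : CCVertex K Λ ts tp => a ∈ ccH c ∧ b ∈ ccH c ∧ ccEdge c a b) a b →
      ccUser b < ccUser a := by
    intro a b h
    induction h with
    | single h => exact this _ _ h
    | tail _ h ih => exact lt_trans (this _ _ h) ih
  exact lt_irrefl _ (mono v v hcyc)
end

section
/- Let Λ, t_s, t_p be natural numbers with t_s + 1 ≤ Λ, and let L_1 ≥ L_2 ≥ ⋯ ≥ L_Λ ≥ 0 be a non-increasing sequence of natural numbers with t_p + 1 ≤ L_1. Then the number of pairs (T, S) with T ⊆ {1,…,Λ}, |T| = t_s + 1, S ⊆ {1,…,L_1}, |S| = t_p + 1, for which there exist λ ∈ T and j ∈ S with j ≤ L_λ, equals ∑_{n=1}^{Λ} C(Λ − n, t_s) · [ C(L_1, t_p+1) − C(L_1 − L_n, t_p+1) ]. -/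
/-!
Group the pairs `(T, S)` by `n = min T`. As `L` is non-increasing, some `l ∈ T` admits a
`j ∈ S` with `j ≤ L l` iff some `j ∈ S` has `j ≤ L n`, so the fibre over `n` is a product:
the sets `T` with minimum `n`, i.e. `n` together with `ts` elements of `(n, Λ]`, times the sets
`S` meeting `[1, L n]`, counted through the complementary family: the `(tp + 1)`-subsets of
`(L n, L 1]`.
-/

open Finset

theorem Finset.min_eq_coe_iff {α : Type*} [LinearOrder α] {s : Finset α} {a : α} :
    s.min = a ↔ a ∈ s ∧ ∀ b ∈ s, a ≤ b :=
  ⟨fun h => ⟨mem_of_min h, fun _ hb => min_le_of_eq hb h⟩, fun ⟨ha, hle⟩ =>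
    le_antisymm (min_le ha) (Finset.le_min fun b hb => WithTop.coe_le_coe.2 (hle b hb))⟩

theorem card_powersetCard_filter_min_eq {a b n : ℕ} (k : ℕ) (hn : n ∈ Icc a b) :
    #{T ∈ (Icc a b).powersetCard (k + 1) | T.min = (n : WithTop ℕ)} = (b - n).choose k := by
  rw [← Nat.card_Ioc n b, ← card_powersetCard]
  rw [mem_Icc] at hn
  -- `(n : WithTop ℕ)` is `Nat.cast n`; `Nat.cast_withTop` rewrites it to `WithTop.some n`.
  refine card_nbij' (fun T => T.erase n) (insert n) ?_ ?_ ?_ ?_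
  · intro T hT
    simp only [coe_filter, Set.mem_ofPred_eq, mem_powersetCard, Nat.cast_withTop,
      min_eq_coe_iff] at hT
    obtain ⟨⟨hsub, hcard⟩, hnT, hmin⟩ := hT
    simp only [mem_coe, mem_powersetCard]
    refine ⟨fun x hx => ?_, by rw [card_erase_of_mem hnT, hcard, Nat.add_sub_cancel]⟩
    obtain ⟨hxn, hxT⟩ := mem_erase.1 hx
    exact mem_Ioc.2 ⟨(hmin x hxT).lt_of_ne' hxn, (mem_Icc.1 (hsub hxT)).2⟩
  · intro T hT
    simp only [mem_coe, mem_powersetCard] at hT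
    obtain ⟨hsub, hcard⟩ := hT
    have hnT : n ∉ T := fun h => by simpa using hsub h
    simp only [coe_filter, Set.mem_ofPred_eq, mem_powersetCard, Nat.cast_withTop,
      min_eq_coe_iff, mem_insert_self, forall_mem_insert, le_refl, true_and]
    refine ⟨⟨insert_subset (mem_Icc.2 hn) fun x hx => ?_,
      by rw [card_insert_of_notMem hnT, hcard]⟩,
      fun x hx => (mem_Ioc.1 (hsub hx)).1.le⟩
    have hx' := mem_Ioc.1 (hsub hx)
    exact mem_Icc.2 ⟨hn.1.trans hx'.1.le, hx'.2⟩
  · intro T hT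
    simp only [coe_filter, Set.mem_ofPred_eq, Nat.cast_withTop, min_eq_coe_iff] at hT
    exact insert_erase hT.2.1
  · intro T hT
    simp only [mem_coe, mem_powersetCard] at hT
    exact erase_insert fun h => by simpa using hT.1 h

theorem card_powersetCard_filter_exists_le (m r c : ℕ) :
    #{S ∈ (Icc 1 m).powersetCard r | ∃ j ∈ S, j ≤ c} = m.choose r - (m - c).choose r := by
  have hcompl :
      {S ∈ (Icc 1 m).powersetCard r | ¬∃ j ∈ S, j ≤ c} = (Ioc c m).powersetCard r := by
    ext S
    simp only [mem_filter, mem_powersetCard, not_exists, not_and, not_le, subset_iff, mem_Icc,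
      mem_Ioc]
    constructor
    · rintro ⟨⟨hsub, hcard⟩, hgt⟩
      exact ⟨fun x hx => ⟨hgt x hx, (hsub hx).2⟩, hcard⟩
    · rintro ⟨hsub, hcard⟩
      exact ⟨⟨fun x hx => ⟨Nat.one_le_of_lt (hsub hx).1, (hsub hx).2⟩, hcard⟩,
        fun x hx => (hsub hx).1⟩
  have htotal :=
    card_filter_add_card_filter_not (s := (Icc 1 m).powersetCard r) (fun S => ∃ j ∈ S, j ≤ c)
  rw [hcompl, card_powersetCard, card_powersetCard, Nat.card_Ioc, Nat.card_Icc,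
    Nat.add_sub_cancel] at htotal
  exact Nat.eq_sub_of_add_eq htotal

theorem exists_mem_exists_le_iff_of_antitoneOn {α β : Type*} [Preorder α] [Preorder β]
    {L : α → β} {s : Set α} {T : Finset α} {S : Finset β} {n : α} (hL : AntitoneOn L s)
    (hT : ↑T ⊆ s) (hn : n ∈ T) (hmin : ∀ x ∈ T, n ≤ x) :
    (∃ l ∈ T, ∃ j ∈ S, j ≤ L l) ↔ ∃ j ∈ S, j ≤ L n :=
  ⟨fun ⟨l, hl, j, hj, hjl⟩ => ⟨j, hj, hjl.trans (hL (hT hn) (hT hl) (hmin l hl))⟩,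
    fun h => ⟨n, hn, h⟩⟩

theorem stmt7_general (Λ ts tp : ℕ) (L : ℕ → ℕ)
    (hmono : ∀ i j, 1 ≤ i → i ≤ j → j ≤ Λ → L j ≤ L i) :
    ((((Finset.Icc 1 Λ).powersetCard (ts + 1)) ×ˢ
        ((Finset.Icc 1 (L 1)).powersetCard (tp + 1))).filter
      (fun TS : Finset ℕ × Finset ℕ => ∃ l ∈ TS.1, ∃ j ∈ TS.2, j ≤ L l)).card
    = ∑ n ∈ Finset.Icc 1 Λ,
        Nat.choose (Λ - n) ts *
          (Nat.choose (L 1) (tp + 1) - Nat.choose (L 1 - L n) (tp + 1)) := by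
  have hL : AntitoneOn L (Icc 1 Λ) := fun i hi j hj hij =>
    hmono i j (mem_Icc.1 hi).1 hij (mem_Icc.1 hj).2
  rw [card_eq_sum_card_fiberwise (f := fun TS => TS.1.min) (t := (Icc 1 Λ).image Nat.cast) ?_,
    sum_image fun _ _ _ _ h => Nat.cast_injective h]
  · refine sum_congr rfl fun n hn => ?_
    have hfiber :
        {TS ∈ (Icc 1 Λ).powersetCard (ts + 1) ×ˢ (Icc 1 (L 1)).powersetCard (tp + 1) |
          (∃ l ∈ TS.1, ∃ j ∈ TS.2, j ≤ L l) ∧ TS.1.min = (n : WithTop ℕ)} =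
        {T ∈ (Icc 1 Λ).powersetCard (ts + 1) | T.min = (n : WithTop ℕ)} ×ˢ
          {S ∈ (Icc 1 (L 1)).powersetCard (tp + 1) | ∃ j ∈ S, j ≤ L n} := by
      rw [← filter_product]
      refine filter_congr fun ⟨T, S⟩ hTS => ?_
      have hT : ↑T ⊆ (Icc 1 Λ : Set ℕ) :=
        coe_subset.2 (mem_powersetCard.1 (mem_product.1 hTS).1).1
      rw [Nat.cast_withTop, min_eq_coe_iff, and_comm]
      exact and_congr_right fun ⟨hnT, hmin⟩ =>
        exists_mem_exists_le_iff_of_antitoneOn hL hT hnT hmin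
    rw [filter_filter, hfiber, card_product, card_powersetCard_filter_min_eq ts hn,
      card_powersetCard_filter_exists_le]
  · rintro ⟨T, S⟩ hTS
    obtain ⟨hTS, l, hl, -⟩ := mem_filter.1 hTS
    obtain ⟨m, hm⟩ := min_of_mem hl
    exact mem_image.2 ⟨m, (mem_powersetCard.1 (mem_product.1 hTS).1).1 (mem_of_min hm),
      (Nat.cast_withTop m).trans hm.symm⟩

/-- the number of pairs `(T, S)` with `T ⊆ {1,…,Λ}`, `|T| = ts + 1`,
`S ⊆ {1,…,L 1}`, `|S| = tp + 1`, for which there exist `l ∈ T` and `j ∈ S` with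
`j ≤ L l`, equals `∑_{n=1}^{Λ} C(Λ − n, ts) · [C(L 1, tp+1) − C(L 1 − L n, tp+1)]`. -/
theorem stmt7 (Λ ts tp : ℕ) (hts : ts + 1 ≤ Λ) (L : ℕ → ℕ)
    (hmono : ∀ i j, 1 ≤ i → i ≤ j → j ≤ Λ → L j ≤ L i)
    (htp : tp + 1 ≤ L 1) :
    ((((Finset.Icc 1 Λ).powersetCard (ts + 1)) ×ˢ
        ((Finset.Icc 1 (L 1)).powersetCard (tp + 1))).filter
      (fun TS : Finset ℕ × Finset ℕ => ∃ l ∈ TS.1, ∃ j ∈ TS.2, j ≤ L l)).card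
    = ∑ n ∈ Finset.Icc 1 Λ,
        Nat.choose (Λ - n) ts *
          (Nat.choose (L 1) (tp + 1) - Nat.choose (L 1 - L n) (tp + 1)) :=
  stmt7_general Λ ts tp L hmono
end

section
/- Let N, K, Λ be positive natural numbers with Λ dividing K, let M_s, M_p be positive reals with M_s + M_p ≤ N, set L_1 := K/Λ, and suppose t_s := Λ M_s / N and t_p := L_1 M_p / (N(1 − M_s/N)) are natural numbers with 1 ≤ t_s ≤ Λ and t_p ≤ L_1. Then ( ∑_{n=1}^{Λ} C(Λ − n, t_s) · C(L_1, t_p + 1) ) / ( C(Λ, t_s) · C(L_1, t_p) ) = K (1 − (M_s + M_p)/N) / ((t_s + 1)(t_p + 1)). -/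
/-! By the hockey-stick identity the sum is `C(Λ, ts+1) C(L₁, tp+1)`, and
`C(n, k+1) / C(n, k) = (n - k)/(k + 1)` reduces the rate to `(Λ - ts)(L₁ - tp)/((ts+1)(tp+1))`.
With `ts = Λ Ms/N` and `tp = L₁ Mp/(N - Ms)`, the numerator factors as
`Λ (N - Ms)/N · L₁ (N - Ms - Mp)/(N - Ms) = K (1 - (Ms + Mp)/N)`. -/

open Finset

theorem Nat.sum_range_choose_eq_choose_succ (n k : ℕ) :
    ∑ i ∈ range n, i.choose k = n.choose (k + 1) := by
  induction n with
  | zero => simp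
  | succ n ih => rw [sum_range_succ, ih, Nat.choose_succ_succ', add_comm]

theorem Nat.sum_Icc_choose_sub_eq_choose_succ (n k : ℕ) :
    ∑ i ∈ Icc 1 n, (n - i).choose k = n.choose (k + 1) := by
  rw [← Ico_add_one_right_eq_Icc, sum_Ico_reflect (·.choose k) 1 le_rfl]
  simpa using Nat.sum_range_choose_eq_choose_succ n k

theorem Nat.cast_choose_succ_div_cast_choose {𝕜 : Type*} [Field 𝕜] [CharZero 𝕜] {n k : ℕ}
    (h : k ≤ n) : (n.choose (k + 1) : 𝕜) / n.choose k = (n - k) / (k + 1) := by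
  have hpos : (n.choose k : 𝕜) ≠ 0 := Nat.cast_ne_zero.2 (Nat.choose_pos h).ne'
  rw [div_eq_div_iff hpos (Nat.cast_add_one_ne_zero k)]
  have := congrArg (Nat.cast : ℕ → 𝕜) (Nat.choose_succ_right_eq n k)
  push_cast [Nat.cast_sub h] at this
  linear_combination this

theorem sub_mul_div_mul_sub_mul_div_eq {𝕜 : Type*} [Field 𝕜] {N s p a b : 𝕜}
    (hN : N ≠ 0) (hs : s ≠ N) :
    (a - a * s / N) * (b - b * p / (N * (1 - s / N))) = a * b * (1 - (s + p) / N) := by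
  have hNs : N - s ≠ 0 := sub_ne_zero.2 hs.symm
  field_simp
  ring

theorem stmt8_general (N K Λ : ℕ) (hN : 0 < N) (hdvd : Λ ∣ K)
    (Ms Mp : ℝ) (hMp : 0 < Mp) (hsum : Ms + Mp ≤ (N : ℝ))
    (L1 : ℕ) (hL1 : L1 = K / Λ)
    (ts tp : ℕ)
    (hts : (ts : ℝ) = (Λ : ℝ) * Ms / (N : ℝ))
    (htp : (tp : ℝ) = (L1 : ℝ) * Mp / ((N : ℝ) * (1 - Ms / (N : ℝ))))
    (htsΛ : ts ≤ Λ) (htpL : tp ≤ L1) :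
    (∑ n ∈ Finset.Icc 1 Λ, (Nat.choose (Λ - n) ts : ℝ) * (Nat.choose L1 (tp + 1) : ℝ)) /
        ((Nat.choose Λ ts : ℝ) * (Nat.choose L1 tp : ℝ))
    = (K : ℝ) * (1 - (Ms + Mp) / (N : ℝ)) / (((ts : ℝ) + 1) * ((tp : ℝ) + 1)) := by
  have hΛL : (Λ : ℝ) * L1 = K := by exact_mod_cast hL1 ▸ Nat.mul_div_cancel' hdvd
  have hMsN : Ms ≠ N := by linarith
  calc _ = (Λ.choose (ts + 1) : ℝ) * L1.choose (tp + 1) / (Λ.choose ts * L1.choose tp) := by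
        rw [← sum_mul, ← Nat.cast_sum, Nat.sum_Icc_choose_sub_eq_choose_succ]
    _ = ((Λ : ℝ) - ts) * (L1 - tp) / ((ts + 1) * (tp + 1)) := by
        rw [mul_div_mul_comm, Nat.cast_choose_succ_div_cast_choose htsΛ,
          Nat.cast_choose_succ_div_cast_choose htpL, div_mul_div_comm]
    _ = _ := by
        rw [hts, htp, sub_mul_div_mul_sub_mul_div_eq (Nat.cast_ne_zero.2 hN.ne') hMsN, hΛL]

/-- Corollary 3 of the paper: for the uniform association profile
`L_1 = ⋯ = L_Λ = K/Λ`, the rate of Scheme 2 simplifies to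
`K(1 − (Ms+Mp)/N)/((ts+1)(tp+1))`. -/
theorem stmt8 (N K Λ : ℕ) (hN : 0 < N) (hK : 0 < K) (hΛ : 0 < Λ) (hdvd : Λ ∣ K)
    (Ms Mp : ℝ) (hMs : 0 < Ms) (hMp : 0 < Mp) (hsum : Ms + Mp ≤ (N : ℝ))
    (L1 : ℕ) (hL1 : L1 = K / Λ)
    (ts tp : ℕ)
    (hts : (ts : ℝ) = (Λ : ℝ) * Ms / (N : ℝ))
    (htp : (tp : ℝ) = (L1 : ℝ) * Mp / ((N : ℝ) * (1 - Ms / (N : ℝ))))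
    (hts1 : 1 ≤ ts) (htsΛ : ts ≤ Λ) (htpL : tp ≤ L1) :
    (∑ n ∈ Finset.Icc 1 Λ, (Nat.choose (Λ - n) ts : ℝ) * (Nat.choose L1 (tp + 1) : ℝ)) /
        ((Nat.choose Λ ts : ℝ) * (Nat.choose L1 tp : ℝ))
    = (K : ℝ) * (1 - (Ms + Mp) / (N : ℝ)) / (((ts : ℝ) + 1) * ((tp : ℝ) + 1)) :=
  stmt8_general N K Λ hN hdvd Ms Mp hMp hsum L1 hL1 ts tp hts htp htsΛ htpL
end

section
/- Let N, K, Λ, F be positive natural numbers with K ≤ N, and let λ : {1,…,K} → {1,…,Λ} be the user-to-helper-cache assignment (with users and caches ordered). Let C_s, C_p, C_x be positive natural numbers. Suppose there exist functions z_μ : (Fin N → Fin 2^F) → Fin C_s for each μ ∈ {1,…,Λ} (helper-cache placements), p_k : (Fin N → Fin 2^F) → Fin C_p for each k ∈ {1,…,K} (private-cache placements), an encoder x_d : (Fin N → Fin 2^F) → Fin C_x for every demand vector d : {1,…,K} → {1,…,N}, and decoders g_{k,d} : Fin C_x × Fin C_s × Fin C_p → Fin 2^F such that for every file tuple W : Fin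 N → Fin 2^F, every demand vector d, and every user k, g_{k,d}( x_d(W), z_{λ(k)}(W), p_k(W) ) = W(d(k)). Then for every u with 1 ≤ u ≤ K, writing λ_u := λ(u) and q := ⌊N/u⌋, it holds that (2^F)^{u·q} ≤ C_x^{q} · C_s^{λ_u} · C_p^{u}. -/
/-!
Fix `1 ≤ u ≤ K` and `q = ⌊N/u⌋`. Place `u·q` arbitrary files at the indices `1, …, u·q` of the
library and run `q` rounds: in round `j` the users `1, …, u` request the files `u·j + 1, …, u·j + u`.
Users `1, …, u` only see the helper caches `1, …, λ(u)` (the assignment is monotone), so the `q`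
broadcasts, these `λ(u)` helper caches and the `u` private caches determine all `u·q` files.
The bound is the resulting injection, counted.
-/

open Function

theorem card_pow_card_le_of_decode {ι A β : Type*} [Fintype ι] [DecidableEq ι] [Fintype A]
    [Fintype β] (enc : (ι → A) → β) (dec : ι → β → A) (h : ∀ t i, dec i (enc t) = t i) :
    Fintype.card A ^ Fintype.card ι ≤ Fintype.card β := by
  rw [← Fintype.card_fun]
  refine Fintype.card_le_of_injective enc fun t t' htt' => funext fun i => ?_
  rw [← h t i, ← h t' i, htt']

/-- File `(j, k)` of the cut-set argument sits at index `u·j + k + 1` of the library. -/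
def cutSetFileIndex (q u : ℕ) (i : Fin q × Fin u) : ℕ :=
  finProdFinEquiv i + 1

theorem cutSetFileIndex_injective (q u : ℕ) : Injective (cutSetFileIndex q u) :=
  (Nat.succ_injective.comp Fin.val_injective).comp finProdFinEquiv.injective

def cutSetDemand (u j : ℕ) (k : ℕ) : ℕ :=
  if k ≤ u then u * j + k else 1

theorem cutSetDemand_succ {q u : ℕ} (j : Fin q) (k : Fin u) :
    cutSetDemand u j (k + 1) = cutSetFileIndex q u (j, k) := by
  rw [cutSetDemand, if_pos (Nat.succ_le_of_lt k.2), cutSetFileIndex, finProdFinEquiv_apply_val]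
  ring

theorem cutSetDemand_mem_Icc {N K u : ℕ} (hN : 0 < N) (j : Fin (N / u)) {k : ℕ}
    (hk : k ∈ Finset.Icc 1 K) : cutSetDemand u j k ∈ Finset.Icc 1 N := by
  have hj : u * (j + 1) ≤ N := le_trans (Nat.mul_le_mul_left u j.2) (Nat.mul_div_le N u)
  rw [Finset.mem_Icc] at hk ⊢
  unfold cutSetDemand
  split_ifs <;> constructor <;> nlinarith

theorem stmt11_general (N K Λ F : ℕ) (hN : 0 < N)
    (lam : ℕ → ℕ)
    (hlam : ∀ k ∈ Finset.Icc 1 K, lam k ∈ Finset.Icc 1 Λ)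
    (hlammono : ∀ k k', 1 ≤ k → k ≤ k' → k' ≤ K → lam k ≤ lam k')
    (Cs Cp Cx : ℕ)
    (z : ℕ → (ℕ → Fin (2 ^ F)) → Fin Cs)
    (p : ℕ → (ℕ → Fin (2 ^ F)) → Fin Cp)
    (x : (ℕ → ℕ) → (ℕ → Fin (2 ^ F)) → Fin Cx)
    (g : ℕ → (ℕ → ℕ) → Fin Cx × Fin Cs × Fin Cp → Fin (2 ^ F))
    (hcorrect : ∀ (W : ℕ → Fin (2 ^ F)) (d : ℕ → ℕ),
        (∀ k ∈ Finset.Icc 1 K, d k ∈ Finset.Icc 1 N) →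
        ∀ k ∈ Finset.Icc 1 K, g k d (x d W, z (lam k) W, p k W) = W (d k)) :
    ∀ u, 1 ≤ u → u ≤ K →
      (2 ^ F) ^ (u * (N / u)) ≤ Cx ^ (N / u) * Cs ^ (lam u) * Cp ^ u := by
  intro u hu huK
  set q := N / u
  have huser (k : Fin u) : k.1 + 1 ∈ Finset.Icc 1 K := Finset.mem_Icc.2 ⟨by omega, by omega⟩
  have hcache (k : Fin u) : lam (k + 1) - 1 + 1 = lam (k + 1) :=
    Nat.sub_add_cancel (Finset.mem_Icc.1 (hlam _ (huser k))).1
  have hcache_lt (k : Fin u) : lam (k + 1) - 1 < lam u := by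
    have := hlammono (k + 1) u (by omega) k.2 huK
    have := hcache k
    omega
  let library (t : Fin q × Fin u → Fin (2 ^ F)) : ℕ → Fin (2 ^ F) :=
    extend (cutSetFileIndex q u) t 0
  have key := card_pow_card_le_of_decode
    (fun t => ((fun j : Fin q => x (cutSetDemand u j) (library t)),
      (fun μ : Fin (lam u) => z (μ + 1) (library t)), (fun k : Fin u => p (k + 1) (library t))))
    (fun i b => g (i.2 + 1) (cutSetDemand u i.1) (b.1 i.1, b.2.1 ⟨_, hcache_lt i.2⟩, b.2.2 i.2))
    (fun t ⟨j, k⟩ => by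
      simp only [hcache k]
      rw [hcorrect _ _ (fun _ => cutSetDemand_mem_Icc hN j) _ (huser k), cutSetDemand_succ]
      exact (cutSetFileIndex_injective q u).extend_apply t 0 (j, k))
  simpa [Fintype.card_prod, Fintype.card_fun, mul_comm u, mul_assoc] using key

/-- deterministic cut-set bound (Theorem 4 of the paper).  A server stores
`N` files of `F` bits each; each of `K` users (user `k` attached to helper cache
`lam k`, users and caches ordered so that `lam` is nondecreasing) must recover its
demanded file from the broadcast (alphabet size `Cx`), its helper cache (alphabet size
`Cs`) and its private cache (alphabet size `Cp`).  Then for every `1 ≤ u ≤ K`, with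
`q = ⌊N/u⌋`, `(2^F)^(u·q) ≤ Cx^q · Cs^(lam u) · Cp^u`. -/
theorem stmt11 (N K Λ F : ℕ) (hN : 0 < N) (hK : 0 < K) (hΛ : 0 < Λ) (hF : 0 < F)
    (hKN : K ≤ N)
    (lam : ℕ → ℕ)
    (hlam : ∀ k ∈ Finset.Icc 1 K, lam k ∈ Finset.Icc 1 Λ)
    (hlammono : ∀ k k', 1 ≤ k → k ≤ k' → k' ≤ K → lam k ≤ lam k')
    (Cs Cp Cx : ℕ) (hCs : 0 < Cs) (hCp : 0 < Cp) (hCx : 0 < Cx)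
    (z : ℕ → (ℕ → Fin (2 ^ F)) → Fin Cs)
    (p : ℕ → (ℕ → Fin (2 ^ F)) → Fin Cp)
    (x : (ℕ → ℕ) → (ℕ → Fin (2 ^ F)) → Fin Cx)
    (g : ℕ → (ℕ → ℕ) → Fin Cx × Fin Cs × Fin Cp → Fin (2 ^ F))
    (hcorrect : ∀ (W : ℕ → Fin (2 ^ F)) (d : ℕ → ℕ),
        (∀ k ∈ Finset.Icc 1 K, d k ∈ Finset.Icc 1 N) →
        ∀ k ∈ Finset.Icc 1 K, g k d (x d W, z (lam k) W, p k W) = W (d k)) :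
    ∀ u, 1 ≤ u → u ≤ K →
      (2 ^ F) ^ (u * (N / u)) ≤ Cx ^ (N / u) * Cs ^ (lam u) * Cp ^ u :=
  stmt11_general N K Λ F hN lam hlam hlammono Cs Cp Cx z p x g hcorrect
end

section
/- Let N be a positive real, let Λ and L_1 be natural numbers with Λ ≥ 1 and L_1 ≥ 1, and let M_s, M_p be reals satisfying M_s ≥ N(1 − 1/Λ), M_p ≥ (N/Λ)(1 − 1/L_1), and M_s + M_p ≤ N. Then there exist nonnegative reals α, β, γ with α + β + γ = 1 such that α·(N(1 − 1/Λ), (N/Λ)(1 − 1/L_1)) + β·(N(1 − 1/Λ), N/Λ) + γ·(N, 0) = (M_s, M_p), and moreover α·(1/(Λ L_1)) + β·0 + γ·0 = 1 − (M_s + M_p)/N. -/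
/-- memory-sharing step of the high-memory optimality lemma.  Every memory
pair `(Ms, Mp)` with `Ms ≥ N(1 − 1/Λ)`, `Mp ≥ (N/Λ)(1 − 1/L1)` and `Ms + Mp ≤ N` is a
convex combination of the three corner memory pairs of Scheme 2, and the corresponding
convex combination of the rates `1/(Λ·L1)`, `0`, `0` equals `1 − (Ms + Mp)/N`. -/
theorem stmt12 (N : ℝ) (hN : 0 < N) (Λ L1 : ℕ) (hΛ : 1 ≤ Λ) (hL1 : 1 ≤ L1)
    (Ms Mp : ℝ)
    (hMs : N * (1 - 1 / (Λ : ℝ)) ≤ Ms)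
    (hMp : (N / (Λ : ℝ)) * (1 - 1 / (L1 : ℝ)) ≤ Mp)
    (hsum : Ms + Mp ≤ N) :
    ∃ α β γ : ℝ, 0 ≤ α ∧ 0 ≤ β ∧ 0 ≤ γ ∧ α + β + γ = 1 ∧
      α * (N * (1 - 1 / (Λ : ℝ))) + β * (N * (1 - 1 / (Λ : ℝ))) + γ * N = Ms ∧
      α * ((N / (Λ : ℝ)) * (1 - 1 / (L1 : ℝ))) + β * (N / (Λ : ℝ)) + γ * 0 = Mp ∧
      α * (1 / ((Λ : ℝ) * (L1 : ℝ))) + β * 0 + γ * 0 = 1 - (Ms + Mp) / N := by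
  have hΛ1 : (1 : ℝ) ≤ (Λ : ℝ) := by exact_mod_cast hΛ
  have hL11 : (1 : ℝ) ≤ (L1 : ℝ) := by exact_mod_cast hL1
  have hΛ0 : (0 : ℝ) < (Λ : ℝ) := by linarith
  have hL10 : (0 : ℝ) < (L1 : ℝ) := by linarith
  have hN0 : (N : ℝ) ≠ 0 := ne_of_gt hN
  have hΛne : ((Λ : ℝ)) ≠ 0 := ne_of_gt hΛ0
  have hL1ne : ((L1 : ℝ)) ≠ 0 := ne_of_gt hL10
  set α : ℝ := (Λ : ℝ) * (L1 : ℝ) * (N - Ms - Mp) / N with hα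
  set γ : ℝ := (Λ : ℝ) * Ms / N - ((Λ : ℝ) - 1) with hγ
  set β : ℝ := 1 - α - γ with hβ
  refine ⟨α, β, γ, ?_, ?_, ?_, by ring, ?_, ?_, ?_⟩
  · apply div_nonneg _ (le_of_lt hN)
    have : 0 ≤ N - Ms - Mp := by linarith
    positivity
  · -- β ≥ 0
    have h1 : N * (1 - 1 / (Λ : ℝ)) = N - N / (Λ : ℝ) := by field_simp
    have h2 : (N / (Λ : ℝ)) * (1 - 1 / (L1 : ℝ)) = N / (Λ : ℝ) - N / ((Λ : ℝ) * (L1 : ℝ)) := by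
      field_simp
    rw [hβ, hα, hγ]
    have key : (L1 : ℝ) * Mp ≥ ((L1 : ℝ) - 1) * (N - Ms) := by
      have hMs' : N - Ms ≤ N / (Λ : ℝ) := by rw [h1] at hMs; linarith
      have hMp' : (L1 : ℝ) * Mp ≥ ((L1 : ℝ) - 1) * (N / (Λ : ℝ)) := by
        have heq : (L1 : ℝ) * (N / (Λ : ℝ) * (1 - 1 / (L1 : ℝ)))
            = ((L1 : ℝ) - 1) * (N / (Λ : ℝ)) := by field_simp
        have := mul_le_mul_of_nonneg_left hMp hL10.le
        rw [heq] at this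
        linarith
      nlinarith [sub_nonneg.mpr hL11]
    have expand : 1 - (Λ : ℝ) * (L1 : ℝ) * (N - Ms - Mp) / N - ((Λ : ℝ) * Ms / N - ((Λ : ℝ) - 1))
        = ((Λ : ℝ) / N) * ((L1 : ℝ) * Mp - ((L1 : ℝ) - 1) * (N - Ms)) := by
      field_simp; ring
    rw [expand]
    apply mul_nonneg (by positivity)
    linarith
  · -- γ ≥ 0
    have h1 : N * (1 - 1 / (Λ : ℝ)) = N - N / (Λ : ℝ) := by field_simp
    rw [hγ, sub_nonneg, le_div_iff₀ hN]
    rw [h1] at hMs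
    have hc : (Λ : ℝ) * (N / (Λ : ℝ)) = N := by field_simp
    nlinarith [hMs, hΛ0]
  · rw [hβ, hα, hγ]; field_simp; ring
  · rw [hβ, hα, hγ]; field_simp; ring
  · rw [hβ, hα, hγ]; field_simp; ring
end
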